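/- Let x, x′, y, y′, c_x, c_y be points of the hyperbolic plane ℍ such that c_x is the midpoint of x and x′ (dist x c_x = dist c_x x′ = (1/2)·dist x x′) and c_y is the midpoint of y and y′. If dist x′ c_y ≤ dist x c_y and dist y′ c_x ≤ dist y c_x, then dist x′ y′ ≤ dist x y. -/

import Mathlib

/-!
In the hyperboloid model `cosh ∘ dist` is the Minkowski form, and the midpoint `m` of `x` and
`x'` satisfies `x + x' = 2 cosh d(x, m) • m`. Pairing with `p` gives
`cosh d(p, x) + cosh d(p, x') = 2 cosh d(x, m) cosh d(p, m)`, which is increasing in `d(p, m)`.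
Comparing `y'` with `y` at `c_x` and `x'` with `x` at `c_y`, the two resulting inequalities add
up to `2 cosh d(x', y') ≤ 2 cosh d(x, y)`.
-/

open Real UpperHalfPlane

def minkowski (u v : ℝ × ℝ × ℝ) : ℝ := u.1 * v.1 - u.2.1 * v.2.1 - u.2.2 * v.2.2

theorem eq_zero_of_minkowski_self_eq_zero_of_minkowski_eq_zero {w m : ℝ × ℝ × ℝ}
    (hm : 0 < minkowski m m) (hwm : minkowski w m = 0) (hww : minkowski w w = 0) : w = 0 := by
  obtain ⟨a, b, c⟩ := w
  obtain ⟨p, q, r⟩ := m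
  simp only [minkowski] at hm hwm hww
  -- Lagrange's identity `(b² + c²)(q² + r²) = (bq + cr)² + (br - cq)²`.
  have key : a ^ 2 * (p * p - q * q - r * r) = -(b * r - c * q) ^ 2 := by
    linear_combination (a * p + b * q + c * r) * hwm - (q ^ 2 + r ^ 2) * hww
  have ha : a = 0 := by
    have : a ^ 2 * (p * p - q * q - r * r) ≤ 0 := key ▸ neg_nonpos.2 (sq_nonneg _)
    exact pow_eq_zero_iff two_ne_zero |>.1 <|
      le_antisymm (nonpos_of_mul_nonpos_left this hm) (sq_nonneg a)
  subst ha
  have hb : b = 0 := by nlinarith [sq_nonneg b, sq_nonneg c]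
  have hc : c = 0 := by nlinarith [sq_nonneg b, sq_nonneg c]
  simp [hb, hc]

/-- The isometry of `ℍ` onto the upper sheet of the hyperboloid `minkowski u u = 1`. -/
noncomputable def toHyperboloid (z : ℍ) : ℝ × ℝ × ℝ :=
  ((z.re ^ 2 + z.im ^ 2 + 1) / (2 * z.im), z.re / z.im, (z.re ^ 2 + z.im ^ 2 - 1) / (2 * z.im))

theorem cosh_dist_eq_minkowski (z w : ℍ) :
    cosh (dist z w) = minkowski (toHyperboloid z) (toHyperboloid w) := by
  have hd : dist (z : ℂ) w ^ 2 = (z.re - w.re) ^ 2 + (z.im - w.im) ^ 2 := by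
    rw [Complex.dist_eq, Complex.sq_norm, Complex.normSq_apply]
    simp [sq]
  have hz := z.im_pos.ne'
  have hw := w.im_pos.ne'
  rw [cosh_dist, hd, minkowski, toHyperboloid, toHyperboloid]
  field_simp
  ring

theorem minkowski_toHyperboloid_self (z : ℍ) :
    minkowski (toHyperboloid z) (toHyperboloid z) = 1 := by
  rw [← cosh_dist_eq_minkowski, dist_self, cosh_zero]

/-- The difference of the two sides is Minkowski-null and orthogonal to the timelike vector
of `m`, hence zero. -/
theorem toHyperboloid_add_eq_of_midpoint {x x' m : ℍ} (h1 : dist x m = dist m x')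
    (h2 : dist m x' = (1 / 2) * dist x x') :
    toHyperboloid x + toHyperboloid x' = (2 * cosh (dist x m)) • toHyperboloid m := by
  have hxm := cosh_dist_eq_minkowski x m
  have hmx' : cosh (dist x m) = minkowski (toHyperboloid m) (toHyperboloid x') := by
    rw [h1, cosh_dist_eq_minkowski]
  have hxx' : 2 * cosh (dist x m) ^ 2 - 1 = minkowski (toHyperboloid x) (toHyperboloid x') := by
    rw [← cosh_dist_eq_minkowski, show dist x x' = 2 * dist x m by linarith, cosh_two_mul,
      cosh_sq]
    ring
  have hx := minkowski_toHyperboloid_self x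
  have hx' := minkowski_toHyperboloid_self x'
  have hm := minkowski_toHyperboloid_self m
  rw [← sub_eq_zero]
  apply eq_zero_of_minkowski_self_eq_zero_of_minkowski_eq_zero (m := toHyperboloid m)
    (hm ▸ one_pos)
  all_goals
    simp only [minkowski, Prod.fst_add, Prod.snd_add, Prod.fst_sub, Prod.snd_sub, Prod.smul_fst,
      Prod.smul_snd, smul_eq_mul] at hx hx' hm hxm hmx' hxx' ⊢
  · linear_combination -hxm - hmx' - 2 * cosh (dist x m) * hm
  · linear_combination hx + hx' - 2 * hxx' + 4 * cosh (dist x m) * hxm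
      + 4 * cosh (dist x m) * hmx' + 4 * cosh (dist x m) ^ 2 * hm

theorem cosh_dist_add_cosh_dist_of_midpoint {x x' m : ℍ} (h1 : dist x m = dist m x')
    (h2 : dist m x' = (1 / 2) * dist x x') (p : ℍ) :
    cosh (dist p x) + cosh (dist p x') = 2 * cosh (dist x m) * cosh (dist p m) := by
  have hsum := congrArg (minkowski (toHyperboloid p)) (toHyperboloid_add_eq_of_midpoint h1 h2)
  simp only [minkowski, Prod.fst_add, Prod.snd_add, Prod.smul_fst, Prod.smul_snd,
    smul_eq_mul] at hsum
  rw [cosh_dist_eq_minkowski p x, cosh_dist_eq_minkowski p x', cosh_dist_eq_minkowski p m,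
    minkowski, minkowski, minkowski]
  linear_combination hsum

theorem cosh_dist_le_cosh_dist_iff {α : Type*} [PseudoMetricSpace α] {a b c d : α} :
    cosh (dist a b) ≤ cosh (dist c d) ↔ dist a b ≤ dist c d := by
  rw [cosh_le_cosh, abs_of_nonneg dist_nonneg, abs_of_nonneg dist_nonneg]

theorem cosh_dist_add_cosh_dist_le_of_midpoint {x x' m p q : ℍ} (h1 : dist x m = dist m x')
    (h2 : dist m x' = (1 / 2) * dist x x') (hpq : dist p m ≤ dist q m) :
    cosh (dist p x) + cosh (dist p x') ≤ cosh (dist q x) + cosh (dist q x') := by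
  rw [cosh_dist_add_cosh_dist_of_midpoint h1 h2, cosh_dist_add_cosh_dist_of_midpoint h1 h2]
  gcongr
  exact cosh_dist_le_cosh_dist_iff.2 hpq

/-- In the hyperbolic plane, if `c_x` is the midpoint of `x` and `x'`, `c_y` is the midpoint
of `y` and `y'`, `dist x' c_y ≤ dist x c_y` and `dist y' c_x ≤ dist y c_x`, then
`dist x' y' ≤ dist x y`. -/
theorem hyperbolic_reflection_pair_nonexpansive
    (x x' y y' cx cy : UpperHalfPlane)
    (hcx1 : dist x cx = dist cx x') (hcx2 : dist cx x' = (1 / 2) * dist x x')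
    (hcy1 : dist y cy = dist cy y') (hcy2 : dist cy y' = (1 / 2) * dist y y')
    (h1 : dist x' cy ≤ dist x cy) (h2 : dist y' cx ≤ dist y cx) :
    dist x' y' ≤ dist x y := by
  have hy := cosh_dist_add_cosh_dist_le_of_midpoint hcx1 hcx2 h2
  have hx := cosh_dist_add_cosh_dist_le_of_midpoint hcy1 hcy2 h1
  rw [dist_comm y' x, dist_comm y' x', dist_comm y x, dist_comm y x'] at hy
  exact cosh_dist_le_cosh_dist_iff.1 (by linarith)
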